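/- arXiv:1309.1922 — 5 statements merged into one kernel-verified Lean document; each statement's English description precedes it below -/
import Mathlib

section
/- Corollary to equal expectations (M = 2): assume a, b, h are globally Lipschitz continuous. Then E[S*_n] = E[S^c_n] for every n = 0, 1, ..., N. -/
open MeasureTheory ProbabilityTheory

/-- Truncated Milstein one-step map
`D^f_i(x, s, w) = a_i(x) s + Σ_j b_{ij}(x) w_j + Σ_{j,k} h_{ijk}(x)(w_j w_k − Ω_{jk} s)`. -/
noncomputable def Df {d D : ℕ}
    (a : (Fin d → ℝ) → Fin d → ℝ)
    (b : (Fin d → ℝ) → Fin d → Fin D → ℝ)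
    (h3 : (Fin d → ℝ) → Fin d → Fin D → Fin D → ℝ)
    (Om : Fin D → Fin D → ℝ)
    (x : Fin d → ℝ) (s : ℝ) (w : Fin D → ℝ) : Fin d → ℝ :=
  fun i => a x i * s + (∑ j, b x i j * w j)
    + ∑ j, ∑ k, h3 x i j k * (w j * w k - Om j k * s)

/-- Coarse one-step map for refinement factor 2:
`D^c_i(x₁, x₂, s, u, v) = a_i(x₁) s + Σ_j b_{ij}(x₂)(u_j+v_j)
  + Σ_{j,k} h_{ijk}(x₂)((u_j+v_j)(u_k+v_k) − Ω_{jk} s − u_j v_k + v_j u_k)`. -/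
noncomputable def Dc {d D : ℕ}
    (a : (Fin d → ℝ) → Fin d → ℝ)
    (b : (Fin d → ℝ) → Fin d → Fin D → ℝ)
    (h3 : (Fin d → ℝ) → Fin d → Fin D → Fin D → ℝ)
    (Om : Fin D → Fin D → ℝ)
    (x1 x2 : Fin d → ℝ) (s : ℝ) (u v : Fin D → ℝ) : Fin d → ℝ :=
  fun i => a x1 i * s + (∑ j, b x2 i j * (u j + v j))
    + ∑ j, ∑ k, h3 x2 i j k *
        ((u j + v j) * (u k + v k) - Om j k * s - u j * v k + v j * u k)

/-!
Both schemes have the form `S_{n+1} = S_n + a(S*_n) Δt + M_n`, where `M_n` is a sum of products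
`f(S_n) g(δW_{2n}, δW_{2n+1})` with `f` Lipschitz, so `f(S_n)` is integrable, and `g` of mean
zero: the pair `(δW_{2n}, δW_{2n+1})` is independent of the past, `E[(u + v)_j (u + v)_k] = Δt Ω_jk`
for its sum `u + v = ΔW_n`, and the Lévy-area terms `v_j u_k - u_j v_k` of the coarse map have mean
zero. Hence both means obey `E[S_{n+1}] = E[S_n] + Δt E[a(S*_n)]`, the same recursion driven by
the starred path.
-/

open scoped NNReal

section Centered

variable {Ω : Type*} [MeasurableSpace Ω] {μ : Measure Ω}

def IsCentered (μ : Measure Ω) (f : Ω → ℝ) : Prop :=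
  Integrable f μ ∧ ∫ ω, f ω ∂μ = 0

lemma IsCentered.add {f g : Ω → ℝ} (hf : IsCentered μ f) (hg : IsCentered μ g) :
    IsCentered μ fun ω => f ω + g ω :=
  ⟨hf.1.add hg.1, by rw [integral_add hf.1 hg.1, hf.2, hg.2, add_zero]⟩

lemma IsCentered.sub {f g : Ω → ℝ} (hf : IsCentered μ f) (hg : IsCentered μ g) :
    IsCentered μ fun ω => f ω - g ω :=
  ⟨hf.1.sub hg.1, by rw [integral_sub hf.1 hg.1, hf.2, hg.2, sub_zero]⟩

lemma IsCentered.sum {ι : Type*} (s : Finset ι) {f : ι → Ω → ℝ}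
    (hf : ∀ l ∈ s, IsCentered μ (f l)) : IsCentered μ fun ω => ∑ l ∈ s, f l ω :=
  ⟨integrable_finsetSum s fun l hl => (hf l hl).1, by
    rw [integral_finsetSum s fun l hl => (hf l hl).1]
    exact Finset.sum_eq_zero fun l hl => (hf l hl).2⟩

lemma IsCentered.integral_add {f g : Ω → ℝ} (hg : IsCentered μ g) (hf : Integrable f μ) :
    ∫ ω, f ω + g ω ∂μ = ∫ ω, f ω ∂μ := by
  rw [MeasureTheory.integral_add hf hg.1, hg.2, add_zero]

lemma ProbabilityTheory.IndepFun.isCentered_mul {f g : Ω → ℝ} (hfg : IndepFun f g μ)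
    (hf : Integrable f μ) (hg : IsCentered μ g) : IsCentered μ fun ω => f ω * g ω :=
  ⟨hfg.integrable_mul hf hg.1, by
    rw [hfg.integral_fun_mul_eq_mul_integral hf.1 hg.1.1, hg.2, mul_zero]⟩

lemma integrable_mul_and_two_mul_integral_mul {X Y : Ω → ℝ}
    (hX : Integrable (fun ω => X ω ^ 2) μ) (hY : Integrable (fun ω => Y ω ^ 2) μ)
    (hXY : Integrable (fun ω => (X ω + Y ω) ^ 2) μ) :
    Integrable (fun ω => X ω * Y ω) μ ∧ 2 * ∫ ω, X ω * Y ω ∂μ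
      = ∫ ω, (X ω + Y ω) ^ 2 ∂μ - ∫ ω, X ω ^ 2 ∂μ - ∫ ω, Y ω ^ 2 ∂μ := by
  have hpol : (fun ω => X ω * Y ω) = fun ω => ((X ω + Y ω) ^ 2 - X ω ^ 2 - Y ω ^ 2) / 2 := by
    funext ω; ring
  have hXY' : Integrable (fun ω => (X ω + Y ω) ^ 2 - X ω ^ 2) μ := hXY.sub hX
  rw [hpol, integral_div, integral_sub hXY' hY, integral_sub hXY hX]
  exact ⟨(hXY'.sub hY).div_const 2, by ring⟩

lemma ProbabilityTheory.HasLaw.isCentered_and_integral_sq [IsProbabilityMeasure μ] {Y : Ω → ℝ}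
    {v : ℝ≥0} (hY : HasLaw Y (gaussianReal 0 v) μ) :
    IsCentered μ Y ∧ Integrable (fun ω => Y ω ^ 2) μ ∧ ∫ ω, Y ω ^ 2 ∂μ = v := by
  have hL2 : MemLp Y 2 μ := by
    have h := memLp_id_gaussianReal (μ := 0) (v := v) 2
    rw [← hY.map_eq] at h
    exact h.comp_of_map hY.aemeasurable
  have hmean : ∫ ω, Y ω ∂μ = 0 := by
    rw [hY.integral_eq, integral_id_gaussianReal]
  refine ⟨⟨hL2.integrable one_le_two, hmean⟩, hL2.integrable_sq, ?_⟩
  have := variance_eq_sub hL2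
  rw [hY.variance_eq, variance_id_gaussianReal] at this
  simpa [hmean] using this.symm

end Centered

section Covariance

variable {Ω ι : Type*} [MeasurableSpace Ω] {μ : Measure Ω}

def HasCenteredCov (μ : Measure Ω) (W : Ω → ι → ℝ) (C : ι → ι → ℝ) : Prop :=
  (∀ j, IsCentered μ fun ω => W ω j) ∧ ∀ j k, IsCentered μ fun ω => W ω j * W ω k - C j k

lemma ProbabilityTheory.IndepFun.isCentered_mul_apply {U V : Ω → ι → ℝ} (hUV : IndepFun U V μ)
    (hU : ∀ j, Integrable (fun ω => U ω j) μ) (hV : ∀ k, IsCentered μ fun ω => V ω k) (j k : ι) :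
    IsCentered μ fun ω => U ω j * V ω k :=
  (hUV.comp (measurable_pi_apply j) (measurable_pi_apply k)).isCentered_mul (hU j) (hV k)

lemma HasCenteredCov.add {U V : Ω → ι → ℝ} {C₁ C₂ : ι → ι → ℝ} (hU : HasCenteredCov μ U C₁)
    (hV : HasCenteredCov μ V C₂) (hUV : IndepFun U V μ) : HasCenteredCov μ (U + V) (C₁ + C₂) := by
  refine ⟨fun j => (hU.1 j).add (hV.1 j), fun j k => ?_⟩
  have hUV' := hUV.isCentered_mul_apply (fun j => (hU.1 j).1) hV.1 j k
  have hVU' := hUV.symm.isCentered_mul_apply (fun j => (hV.1 j).1) hU.1 j k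
  convert (((hU.2 j k).add (hV.2 j k)).add hUV').add hVU' using 2 with ω
  simp only [Pi.add_apply]
  ring

lemma HasCenteredCov.add_of_half {U V : Ω → ι → ℝ} {Q : ι → ι → ℝ} {s : ℝ}
    (hU : HasCenteredCov μ U fun j k => Q j k * (s / 2))
    (hV : HasCenteredCov μ V fun j k => Q j k * (s / 2)) (hUV : IndepFun U V μ) :
    HasCenteredCov μ (U + V) fun j k => Q j k * s := by
  convert hU.add hV hUV using 1
  funext j k
  simp only [Pi.add_apply]
  ring

lemma hasCenteredCov_of_hasLaw_gaussianReal [Fintype ι] [DecidableEq ι] [IsProbabilityMeasure μ]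
    {W : Ω → ι → ℝ} {Q : ι → ι → ℝ} {c : ℝ} (hc : 0 ≤ c)
    (hQ_symm : ∀ j k, Q j k = Q k j) (hQ_psd : ∀ u : ι → ℝ, 0 ≤ ∑ j, ∑ k, u j * Q j k * u k)
    (hW : ∀ u : ι → ℝ, HasLaw (fun ω => ∑ j, u j * W ω j)
      (gaussianReal 0 (c * ∑ j, ∑ k, u j * Q j k * u k).toNNReal) μ) :
    HasCenteredCov μ W fun j k => Q j k * c := by
  have moments (u : ι → ℝ) := (hW u).isCentered_and_integral_sq
  have hsingle (j : ι) (ω : Ω) : ∑ l, (Pi.single j 1 : ι → ℝ) l * W ω l = W ω j := by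
    simp [Pi.single_apply]
  have hpair (j k : ι) (ω : Ω) :
      ∑ l, (Pi.single j 1 + Pi.single k 1 : ι → ℝ) l * W ω l = W ω j + W ω k := by
    simp [Pi.single_apply, add_mul, Finset.sum_add_distrib]
  have hQsingle (j : ι) :
      ∑ l, ∑ l', (Pi.single j 1 : ι → ℝ) l * Q l l' * (Pi.single j 1 : ι → ℝ) l' = Q j j := by
    simp [Pi.single_apply]
  have hQpair (j k : ι) : ∑ l, ∑ l', (Pi.single j 1 + Pi.single k 1 : ι → ℝ) l * Q l l' *
      (Pi.single j 1 + Pi.single k 1 : ι → ℝ) l' = Q j j + Q j k + Q k j + Q k k := by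
    simp [Pi.single_apply, add_mul, mul_add, Finset.sum_add_distrib]
    ring
  have hvar (u : ι → ℝ) : ((c * ∑ j, ∑ k, u j * Q j k * u k).toNNReal : ℝ)
      = c * ∑ j, ∑ k, u j * Q j k * u k :=
    Real.coe_toNNReal _ (mul_nonneg hc (hQ_psd u))
  refine ⟨fun j => ?_, fun j k => ?_⟩
  · simpa only [hsingle] using (moments (Pi.single j 1)).1
  obtain ⟨-, hjk2, hjk⟩ := moments (Pi.single j 1 + Pi.single k 1)
  obtain ⟨-, hj2, hj⟩ := moments (Pi.single j 1)
  obtain ⟨-, hk2, hk⟩ := moments (Pi.single k 1)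
  simp only [hvar] at hjk hj hk
  simp only [hsingle, hpair, hQsingle, hQpair] at hjk2 hjk hj2 hj hk2 hk
  obtain ⟨hint, hpol⟩ := integrable_mul_and_two_mul_integral_mul hj2 hk2 hjk2
  have hmean : ∫ ω, W ω j * W ω k ∂μ = Q j k * c := by
    rw [hQ_symm k j] at hjk
    linarith
  refine ⟨hint.sub (integrable_const _), ?_⟩
  rw [integral_sub hint (integrable_const _), hmean, integral_const]
  simp

end Covariance

lemma LipschitzWith.integrable_comp {Ω E F : Type*} [MeasurableSpace Ω] {μ : Measure Ω}
    [IsFiniteMeasure μ] [NormedAddCommGroup E] [NormedAddCommGroup F] {K : ℝ≥0} {f : E → F}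
    (hf : LipschitzWith K f) {X : Ω → E} (hX : Integrable X μ) :
    Integrable (fun ω => f (X ω)) μ := by
  refine Integrable.mono' ((integrable_const ‖f 0‖).add (hX.norm.const_mul K))
    (hf.continuous.comp_aestronglyMeasurable hX.1) (ae_of_all _ fun ω => ?_)
  calc ‖f (X ω)‖ ≤ ‖f 0‖ + ‖f (X ω) - f 0‖ := norm_le_norm_add_norm_sub' _ _
    _ ≤ ‖f 0‖ + K * ‖X ω‖ := by simpa using hf.norm_sub_le (X ω) 0

section Past

variable {Ω β : Type*} [MeasurableSpace β]

abbrev pastSigma (X : ℕ → Ω → β) (k : ℕ) : MeasurableSpace Ω :=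
  ⨆ m < k, MeasurableSpace.comap (X m) inferInstance

lemma measurable_pastSigma {X : ℕ → Ω → β} {m k : ℕ} (hmk : m < k) :
    Measurable[pastSigma X k] (X m) :=
  Measurable.of_comap_le (le_iSup₂ (f := fun m (_ : m < k) => MeasurableSpace.comap (X m) _) m hmk)

lemma pastSigma_mono (X : ℕ → Ω → β) : Monotone (pastSigma X) := fun _ _ hkl =>
  iSup₂_mono' fun m hm => ⟨m, hm.trans_le hkl, le_rfl⟩

lemma indepFun_pair_of_measurable_pastSigma [MeasurableSpace Ω] {μ : Measure Ω} {γ : Type*}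
    [MeasurableSpace γ] {X : ℕ → Ω → β}
    {K k : ℕ} (hX : iIndepFun (fun m : Fin K => X m) μ) (hXm : ∀ m, Measurable (X m))
    (hk : k + 1 < K) {Z : Ω → γ} (hZ : Measurable[pastSigma X k] Z) :
    IndepFun Z (fun ω => (X k ω, X (k + 1) ω)) μ := by
  rw [iIndepFun_iff_iIndep] at hX
  have hind := indep_iSup_of_disjoint (fun m : Fin K => (hXm m).comap_le) hX
    (S := {m : Fin K | (m : ℕ) < k}) (T := {m | k ≤ (m : ℕ)})
    (Set.disjoint_left.2 fun m (hS : (m : ℕ) < k) (hT : k ≤ (m : ℕ)) => absurd hS (not_lt.2 hT))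
  rw [IndepFun_iff_Indep]
  refine indep_of_indep_of_le_right (indep_of_indep_of_le_left hind ?_) ?_
  · refine hZ.comap_le.trans (iSup₂_le fun m hm => ?_)
    exact le_iSup₂_of_le (f := fun (i : Fin K) (_ : i ∈ {m : Fin K | (m : ℕ) < k}) =>
      MeasurableSpace.comap (X i) _) ⟨m, by omega⟩ hm le_rfl
  · refine (MeasurableSpace.comap_prodMk (X k) (X (k + 1))).le.trans (sup_le ?_ ?_)
    · exact le_iSup₂_of_le (f := fun (i : Fin K) (_ : i ∈ {m : Fin K | k ≤ (m : ℕ)}) =>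
        MeasurableSpace.comap (X i) _) ⟨k, by omega⟩ (le_refl k) le_rfl
    · exact le_iSup₂_of_le (f := fun (i : Fin K) (_ : i ∈ {m : Fin K | k ≤ (m : ℕ)}) =>
        MeasurableSpace.comap (X i) _) ⟨k + 1, hk⟩ (Nat.le_succ k) le_rfl

end Past

lemma ProbabilityTheory.IndepFun.isCentered_lipschitz_mul {Ω E F : Type*} [MeasurableSpace Ω]
    {μ : Measure Ω} [IsFiniteMeasure μ] [NormedAddCommGroup E] [MeasurableSpace E]
    [OpensMeasurableSpace E] [MeasurableSpace F] {X : Ω → E} {Y : Ω → F}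
    (hXY : IndepFun X Y μ) (hX : Integrable X μ) {K : ℝ≥0} {f : E → ℝ} (hf : LipschitzWith K f)
    {g : F → ℝ} (hg : Measurable g) (hgY : IsCentered μ fun ω => g (Y ω)) :
    IsCentered μ fun ω => f (X ω) * g (Y ω) :=
  (hXY.comp hf.continuous.measurable hg).isCentered_mul (hf.integrable_comp hX) hgY

lemma integrable_add_and_integral_add_of_isCentered {Ω ι : Type*} [MeasurableSpace Ω]
    {μ : Measure Ω} [Fintype ι] {X F A : Ω → ι → ℝ} (hX : Integrable X μ)
    (hA : ∀ i, Integrable (fun ω => A ω i) μ) (hF : ∀ i, IsCentered μ fun ω => F ω i - A ω i) :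
    Integrable (fun ω => X ω + F ω) μ ∧
      ∀ i, ∫ ω, (X ω + F ω) i ∂μ = ∫ ω, X ω i ∂μ + ∫ ω, A ω i ∂μ := by
  have hsplit (i : ι) : (fun ω => (X ω + F ω) i) = fun ω => (X ω i + A ω i) + (F ω i - A ω i) := by
    funext ω; simp only [Pi.add_apply]; ring
  have hXA (i : ι) : Integrable (fun ω => X ω i + A ω i) μ := (integrable_pi_iff.1 hX i).add (hA i)
  refine ⟨integrable_pi_iff.2 fun i => ?_, fun i => ?_⟩
  · rw [hsplit]
    exact (hXA i).add (hF i).1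
  · rw [hsplit, (hF i).integral_add (hXA i), integral_add (integrable_pi_iff.1 hX i) (hA i)]

section Milstein

variable {d D : ℕ} {a : (Fin d → ℝ) → Fin d → ℝ} {b : (Fin d → ℝ) → Fin d → Fin D → ℝ}
  {h3 : (Fin d → ℝ) → Fin d → Fin D → Fin D → ℝ} {Om : Fin D → Fin D → ℝ} {s : ℝ}
  {Ka Kb Kh : ℝ≥0}

lemma continuous_Df (ha : ∀ i, Continuous fun x => a x i) (hb : ∀ i j, Continuous fun x => b x i j)
    (hh : ∀ i j k, Continuous fun x => h3 x i j k) :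
    Continuous fun p : (Fin d → ℝ) × (Fin D → ℝ) => Df a b h3 Om p.1 s p.2 := by
  refine continuous_pi fun i => ?_
  have := ha i
  have := hb i
  have := hh i
  unfold Df
  fun_prop

lemma continuous_Dc (ha : ∀ i, Continuous fun x => a x i) (hb : ∀ i j, Continuous fun x => b x i j)
    (hh : ∀ i j k, Continuous fun x => h3 x i j k) :
    Continuous fun p : ((Fin d → ℝ) × (Fin d → ℝ)) × ((Fin D → ℝ) × (Fin D → ℝ)) =>
      Dc a b h3 Om p.1.1 p.1.2 s p.2.1 p.2.2 := by
  refine continuous_pi fun i => ?_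
  have := ha i
  have := hb i
  have := hh i
  unfold Dc
  fun_prop

lemma Dc_apply_eq_Df_apply_add (x₁ x₂ : Fin d → ℝ) (u v : Fin D → ℝ) (i : Fin d) :
    Dc a b h3 Om x₁ x₂ s u v i = a x₁ i * s + (Df a b h3 Om x₂ s (u + v) i - a x₂ i * s)
      + ∑ j, ∑ k, h3 x₂ i j k * (v j * u k - u j * v k) := by
  have hsplit (j k : Fin D) : h3 x₂ i j k * ((u j + v j) * (u k + v k) - Om j k * s
      - u j * v k + v j * u k) = h3 x₂ i j k * ((u j + v j) * (u k + v k) - Om j k * s)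
      + h3 x₂ i j k * (v j * u k - u j * v k) := by ring
  simp only [Dc, Df, Pi.add_apply, hsplit, Finset.sum_add_distrib]
  ring

lemma measurable_pastSigma_milstein {Ω : Type*} (ha : ∀ i, Continuous fun x => a x i)
    (hb : ∀ i j, Continuous fun x => b x i j) (hh : ∀ i j k, Continuous fun x => h3 x i j k)
    {S0 : Fin d → ℝ} {δW : ℕ → Ω → Fin D → ℝ} {Sstar Sc : ℕ → Ω → Fin d → ℝ}
    (hstar0 : ∀ ω, Sstar 0 ω = S0)
    (hstar : ∀ n ω, Sstar (n + 1) ω = Sstar n ω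
      + Df a b h3 Om (Sstar n ω) s (δW (2 * n) ω + δW (2 * n + 1) ω))
    (hc0 : ∀ ω, Sc 0 ω = S0)
    (hc : ∀ n ω, Sc (n + 1) ω = Sc n ω
      + Dc a b h3 Om (Sstar n ω) (Sc n ω) s (δW (2 * n) ω) (δW (2 * n + 1) ω)) (n : ℕ) :
    Measurable[pastSigma δW (2 * n)] (Sstar n) ∧ Measurable[pastSigma δW (2 * n)] (Sc n) := by
  induction n with
  | zero =>
    rw [funext hstar0, funext hc0]
    exact ⟨measurable_const, measurable_const⟩
  | succ n ih =>
    have hle := pastSigma_mono δW (show 2 * n ≤ 2 * (n + 1) by omega)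
    have hS := ih.1.mono hle le_rfl
    have hC := ih.2.mono hle le_rfl
    have hU : Measurable[pastSigma δW (2 * (n + 1))] (δW (2 * n)) := measurable_pastSigma (by omega)
    have hV : Measurable[pastSigma δW (2 * (n + 1))] (δW (2 * n + 1)) :=
      measurable_pastSigma (by omega)
    rw [funext (hstar n), funext (hc n)]
    exact ⟨hS.add ((continuous_Df ha hb hh).measurable.comp (hS.prodMk (hU.add hV))),
      hC.add ((continuous_Dc ha hb hh).measurable.comp ((hS.prodMk hC).prodMk (hU.prodMk hV)))⟩

variable {Ω : Type*} [MeasurableSpace Ω] {μ : Measure Ω} [IsFiniteMeasure μ]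

lemma isCentered_Df_sub_drift (hb : ∀ i j, LipschitzWith Kb fun x => b x i j)
    (hh : ∀ i j k, LipschitzWith Kh fun x => h3 x i j k) {X : Ω → Fin d → ℝ}
    {W : Ω → Fin D → ℝ} (hX : Integrable X μ) (hXW : IndepFun X W μ)
    (hW : HasCenteredCov μ W fun j k => Om j k * s) (i : Fin d) :
    IsCentered μ fun ω => Df a b h3 Om (X ω) s (W ω) i - a (X ω) i * s := by
  have hdiffusion := IsCentered.sum Finset.univ fun j _ =>
    hXW.isCentered_lipschitz_mul hX (hb i j) (measurable_pi_apply j) (hW.1 j)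
  have hmilstein := IsCentered.sum Finset.univ fun j _ => IsCentered.sum Finset.univ fun k _ =>
    hXW.isCentered_lipschitz_mul hX (hh i j k)
      (show Measurable fun w : Fin D → ℝ => w j * w k - Om j k * s by fun_prop) (hW.2 j k)
  convert hdiffusion.add hmilstein using 2 with ω
  simp only [Df]
  ring

lemma isCentered_Dc_sub_drift (hb : ∀ i j, LipschitzWith Kb fun x => b x i j)
    (hh : ∀ i j k, LipschitzWith Kh fun x => h3 x i j k) {X₁ X₂ : Ω → Fin d → ℝ}
    {U V : Ω → Fin D → ℝ} (hX₂ : Integrable X₂ μ) (hXUV : IndepFun X₂ (fun ω => (U ω, V ω)) μ)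
    (hU : HasCenteredCov μ U fun j k => Om j k * (s / 2))
    (hV : HasCenteredCov μ V fun j k => Om j k * (s / 2)) (hUV : IndepFun U V μ) (i : Fin d) :
    IsCentered μ fun ω => Dc a b h3 Om (X₁ ω) (X₂ ω) s (U ω) (V ω) i - a (X₁ ω) i * s := by
  have hXW : IndepFun X₂ (U + V) μ := hXUV.comp measurable_id (measurable_fst.add measurable_snd)
  have hfine := isCentered_Df_sub_drift (a := a) hb hh hX₂ hXW (hU.add_of_half hV hUV) i
  have hlevy := IsCentered.sum Finset.univ fun j _ => IsCentered.sum Finset.univ fun k _ =>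
    hXUV.isCentered_lipschitz_mul hX₂ (hh i j k)
      (show Measurable fun p : (Fin D → ℝ) × (Fin D → ℝ) => p.2 j * p.1 k - p.1 j * p.2 k by
        fun_prop)
      ((hUV.symm.isCentered_mul_apply (fun j => (hV.1 j).1) hU.1 j k).sub
        (hUV.isCentered_mul_apply (fun j => (hU.1 j).1) hV.1 j k))
  convert hfine.add hlevy using 2 with ω
  rw [Dc_apply_eq_Df_apply_add, Pi.add_apply]
  ring

lemma integrable_add_Df_and_integral_eq (ha : ∀ i, LipschitzWith Ka fun x => a x i)
    (hb : ∀ i j, LipschitzWith Kb fun x => b x i j)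
    (hh : ∀ i j k, LipschitzWith Kh fun x => h3 x i j k) {X : Ω → Fin d → ℝ}
    {U V : Ω → Fin D → ℝ} (hX : Integrable X μ) (hXUV : IndepFun X (fun ω => (U ω, V ω)) μ)
    (hU : HasCenteredCov μ U fun j k => Om j k * (s / 2))
    (hV : HasCenteredCov μ V fun j k => Om j k * (s / 2)) (hUV : IndepFun U V μ) :
    Integrable (fun ω => X ω + Df a b h3 Om (X ω) s (U ω + V ω)) μ ∧
      ∀ i, ∫ ω, (X ω + Df a b h3 Om (X ω) s (U ω + V ω)) i ∂μ
        = ∫ ω, X ω i ∂μ + (∫ ω, a (X ω) i ∂μ) * s := by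
  have hXW : IndepFun X (U + V) μ := hXUV.comp measurable_id (measurable_fst.add measurable_snd)
  simpa only [integral_mul_const, Pi.add_apply] using
    integrable_add_and_integral_add_of_isCentered hX
      (fun i => ((ha i).integrable_comp hX).mul_const s)
      (isCentered_Df_sub_drift hb hh hX hXW (hU.add_of_half hV hUV))

lemma integrable_add_Dc_and_integral_eq (ha : ∀ i, LipschitzWith Ka fun x => a x i)
    (hb : ∀ i j, LipschitzWith Kb fun x => b x i j)
    (hh : ∀ i j k, LipschitzWith Kh fun x => h3 x i j k) {X₁ X₂ : Ω → Fin d → ℝ}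
    {U V : Ω → Fin D → ℝ} (hX₁ : Integrable X₁ μ) (hX₂ : Integrable X₂ μ)
    (hXUV : IndepFun X₂ (fun ω => (U ω, V ω)) μ)
    (hU : HasCenteredCov μ U fun j k => Om j k * (s / 2))
    (hV : HasCenteredCov μ V fun j k => Om j k * (s / 2)) (hUV : IndepFun U V μ) :
    Integrable (fun ω => X₂ ω + Dc a b h3 Om (X₁ ω) (X₂ ω) s (U ω) (V ω)) μ ∧
      ∀ i, ∫ ω, (X₂ ω + Dc a b h3 Om (X₁ ω) (X₂ ω) s (U ω) (V ω)) i ∂μ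
        = ∫ ω, X₂ ω i ∂μ + (∫ ω, a (X₁ ω) i ∂μ) * s := by
  simpa only [integral_mul_const] using integrable_add_and_integral_add_of_isCentered hX₂
    (fun i => ((ha i).integrable_comp hX₁).mul_const s)
    (isCentered_Dc_sub_drift hb hh hX₂ hXUV hU hV hUV)

end Milstein

theorem equal_expectations_star_coarse_general
    (d D : ℕ)
    (a : (Fin d → ℝ) → Fin d → ℝ)
    (b : (Fin d → ℝ) → Fin d → Fin D → ℝ)
    (h3 : (Fin d → ℝ) → Fin d → Fin D → Fin D → ℝ)
    (Ka Kb Kh : NNReal)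
    (ha : ∀ i, LipschitzWith Ka fun x => a x i)
    (hb : ∀ i j, LipschitzWith Kb fun x => b x i j)
    (hhl : ∀ i j k, LipschitzWith Kh fun x => h3 x i j k)
    (Om : Fin D → Fin D → ℝ)
    (hOm_symm : ∀ j k, Om j k = Om k j)
    (hOm_psd : ∀ u : Fin D → ℝ, 0 ≤ ∑ j, ∑ k, u j * Om j k * u k)
    (T : ℝ) (hT : 0 < T) (N : ℕ)
    (Ω₀ : Type*) [MeasurableSpace Ω₀] (μ : Measure Ω₀) [IsProbabilityMeasure μ]
    (δW : ℕ → Ω₀ → Fin D → ℝ)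
    (hmeas : ∀ m, Measurable (δW m))
    (hindep : iIndepFun
      (fun m : Fin (2 * N) => δW ↑m) μ)
    (hgauss : ∀ m < 2 * N, ∀ u : Fin D → ℝ,
      Measure.map (fun ω => ∑ j, u j * δW m ω j) μ
        = gaussianReal 0 (Real.toNNReal ((T / ↑N / 2) * ∑ j, ∑ k, u j * Om j k * u k)))
    (S0 : Fin d → ℝ)
    (Sstar Sc : ℕ → Ω₀ → Fin d → ℝ)
    (hstar0 : ∀ ω, Sstar 0 ω = S0)
    (hstar : ∀ n ω, Sstar (n + 1) ω = Sstar n ω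
      + Df a b h3 Om (Sstar n ω) (T / ↑N) (δW (2 * n) ω + δW (2 * n + 1) ω))
    (hc0 : ∀ ω, Sc 0 ω = S0)
    (hc : ∀ n ω, Sc (n + 1) ω = Sc n ω
      + Dc a b h3 Om (Sstar n ω) (Sc n ω) (T / ↑N) (δW (2 * n) ω) (δW (2 * n + 1) ω)) :
    ∀ n ≤ N, ∀ i, ∫ ω, Sstar n ω i ∂μ = ∫ ω, Sc n ω i ∂μ := by
  have hnoise : ∀ m < 2 * N, HasCenteredCov μ (δW m) fun j k => Om j k * (T / N / 2) :=
    fun m hm => hasCenteredCov_of_hasLaw_gaussianReal (by positivity) hOm_symm hOm_psd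
      fun u => ⟨by fun_prop, hgauss m hm u⟩
  have hpair (n : ℕ) (hn : n < N) : IndepFun (δW (2 * n)) (δW (2 * n + 1)) μ :=
    hindep.indepFun (i := ⟨2 * n, by omega⟩) (j := ⟨2 * n + 1, by omega⟩) (by simp)
  have hpast (n : ℕ) (hn : n < N) {Z : Ω₀ → Fin d → ℝ} (hZ : Measurable[pastSigma δW (2 * n)] Z) :=
    indepFun_pair_of_measurable_pastSigma hindep hmeas (by omega : 2 * n + 1 < 2 * N) hZ
  have hadapted := measurable_pastSigma_milstein (fun i => (ha i).continuous)
    (fun i j => (hb i j).continuous) (fun i j k => (hhl i j k).continuous) hstar0 hstar hc0 hc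
  suffices ∀ n ≤ N, Integrable (Sstar n) μ ∧ Integrable (Sc n) μ ∧
      ∀ i, ∫ ω, Sstar n ω i ∂μ = ∫ ω, Sc n ω i ∂μ from fun n hn => (this n hn).2.2
  intro n
  induction n with
  | zero =>
    intro _
    rw [funext hstar0, funext hc0]
    exact ⟨integrable_const _, integrable_const _, fun _ => rfl⟩
  | succ n ih =>
    intro hn
    obtain ⟨hS, hC, hmean⟩ := ih (by omega)
    obtain ⟨hS', hS'mean⟩ := integrable_add_Df_and_integral_eq ha hb hhl hS
      (hpast n hn (hadapted n).1) (hnoise _ (by omega)) (hnoise _ (by omega)) (hpair n hn)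
    obtain ⟨hC', hC'mean⟩ := integrable_add_Dc_and_integral_eq ha hb hhl hS hC
      (hpast n hn (hadapted n).2) (hnoise _ (by omega)) (hnoise _ (by omega)) (hpair n hn)
    rw [funext (hstar n), funext (hc n)]
    exact ⟨hS', hC', fun i => by rw [hS'mean, hC'mean, hmean]⟩

theorem equal_expectations_star_coarse
    (d D : ℕ) (hd : 1 ≤ d) (hD : 1 ≤ D)
    (a : (Fin d → ℝ) → Fin d → ℝ)
    (b : (Fin d → ℝ) → Fin d → Fin D → ℝ)
    (h3 : (Fin d → ℝ) → Fin d → Fin D → Fin D → ℝ)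
    (Ka Kb Kh : NNReal)
    (ha : ∀ i, LipschitzWith Ka fun x => a x i)
    (hb : ∀ i j, LipschitzWith Kb fun x => b x i j)
    (hhl : ∀ i j k, LipschitzWith Kh fun x => h3 x i j k)
    (Om : Fin D → Fin D → ℝ)
    (hOm_symm : ∀ j k, Om j k = Om k j)
    (hOm_psd : ∀ u : Fin D → ℝ, 0 ≤ ∑ j, ∑ k, u j * Om j k * u k)
    (T : ℝ) (hT : 0 < T) (N : ℕ) (hN : 1 ≤ N)
    (Ω₀ : Type*) [MeasurableSpace Ω₀] (μ : Measure Ω₀) [IsProbabilityMeasure μ]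
    (δW : ℕ → Ω₀ → Fin D → ℝ)
    (hmeas : ∀ m, Measurable (δW m))
    (hindep : iIndepFun
      (fun m : Fin (2 * N) => δW ↑m) μ)
    (hgauss : ∀ m < 2 * N, ∀ u : Fin D → ℝ,
      Measure.map (fun ω => ∑ j, u j * δW m ω j) μ
        = gaussianReal 0 (Real.toNNReal ((T / ↑N / 2) * ∑ j, ∑ k, u j * Om j k * u k)))
    (S0 : Fin d → ℝ)
    (Sstar Sc : ℕ → Ω₀ → Fin d → ℝ)
    (hstar0 : ∀ ω, Sstar 0 ω = S0)
    (hstar : ∀ n ω, Sstar (n + 1) ω = Sstar n ω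
      + Df a b h3 Om (Sstar n ω) (T / ↑N) (δW (2 * n) ω + δW (2 * n + 1) ω))
    (hc0 : ∀ ω, Sc 0 ω = S0)
    (hc : ∀ n ω, Sc (n + 1) ω = Sc n ω
      + Dc a b h3 Om (Sstar n ω) (Sc n ω) (T / ↑N) (δW (2 * n) ω) (δW (2 * n + 1) ω)) :
    ∀ n ≤ N, ∀ i, ∫ ω, Sstar n ω i ∂μ = ∫ ω, Sc n ω i ∂μ :=
  equal_expectations_star_coarse_general d D a b h3 Ka Kb Kh ha hb hhl Om hOm_symm hOm_psd T hT N Ω₀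
    μ δW hmeas hindep hgauss S0 Sstar Sc hstar0 hstar hc0 hc
end

section
/- Optimal multilevel sample allocation: let L ∈ ℕ, let V_0, ..., V_L and h_0, ..., h_L be positive reals, and let ε > 0. Define N*_l = (2/ε²) √(V_l h_l) (Σ_{k=0}^{L} √(V_k/h_k)) for l = 0, ..., L. Then (i) Σ_{l=0}^{L} V_l/N*_l = ε²/2; (ii) Σ_{l=0}^{L} N*_l/h_l = (2/ε²)(Σ_{l=0}^{L} √(V_l/h_l))²; and (iii) for every choice of positive reals N_0, ..., N_L with Σ_{l=0}^{L} V_l/N_l ≤ ε²/2, one has Σ_{l=0}^{L} N_l/h_l ≥ (2/ε²)(Σ_{l=0}^{L} √(V_l/h_l))². In other words, N* minimizes the cost Σ N_l/h_l subject to the sampling-variance constraint Σ V_l/N_l ≤ ε²/2. -/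
/-!
With `a l = √(V l / h l)` and `S = ∑ a l`, the allocation `N* l = c √(V l h l) S`, `c = 2 / ε²`,
makes both `V l / N* l = a l / (c S)` and `N* l / h l = c S a l` proportional to `a l`, which gives
the two identities. Optimality is Cauchy–Schwarz: since `a l ^ 2 = (V l / N l) (N l / h l)`,
`S² ≤ (∑ V l / N l) (∑ N l / h l) ≤ c⁻¹ ∑ N l / h l` for every admissible `N`.
-/

namespace Real

lemma div_sqrt_mul {v : ℝ} (hv : 0 ≤ v) (w : ℝ) : v / √(v * w) = √(v / w) := by
  rw [sqrt_mul hv, ← div_div, div_sqrt, sqrt_div hv]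

lemma sqrt_mul_div {v : ℝ} (hv : 0 ≤ v) (w : ℝ) : √(v * w) / w = √(v / w) := by
  rw [sqrt_mul hv, mul_div_assoc, sqrt_div_self', mul_one_div, sqrt_div hv]

end Real

open Finset Real

section Allocation

variable {ι : Type*} (s : Finset ι) (V h : ι → ℝ)

lemma sum_div_mul_sqrt_mul_mul_sum {c : ℝ} (hc : c ≠ 0) (hV : ∀ i ∈ s, 0 ≤ V i)
    (hS : ∑ k ∈ s, √(V k / h k) ≠ 0) :
    ∑ i ∈ s, V i / (c * √(V i * h i) * ∑ k ∈ s, √(V k / h k)) = c⁻¹ := by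
  calc ∑ i ∈ s, V i / (c * √(V i * h i) * ∑ k ∈ s, √(V k / h k))
      = (∑ i ∈ s, √(V i / h i)) / (c * ∑ k ∈ s, √(V k / h k)) := by
        rw [sum_div]
        refine sum_congr rfl fun i hi => ?_
        rw [← div_sqrt_mul (hV i hi)]
        ring
    _ = c⁻¹ := by field_simp

lemma sum_mul_sqrt_mul_mul_sum_div (c : ℝ) (hV : ∀ i ∈ s, 0 ≤ V i) :
    ∑ i ∈ s, c * √(V i * h i) * (∑ k ∈ s, √(V k / h k)) / h i
      = c * (∑ k ∈ s, √(V k / h k)) ^ 2 := by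
  rw [sq, ← mul_assoc, mul_sum]
  refine sum_congr rfl fun i hi => ?_
  rw [← sqrt_mul_div (hV i hi)]
  ring

lemma sq_sum_sqrt_div_le_mul_sum {N : ι → ℝ} (hV : ∀ i ∈ s, 0 ≤ V i) (hh : ∀ i ∈ s, 0 ≤ h i)
    (hN : ∀ i ∈ s, 0 < N i) :
    (∑ i ∈ s, √(V i / h i)) ^ 2 ≤ (∑ i ∈ s, V i / N i) * ∑ i ∈ s, N i / h i := by
  refine sum_sq_le_sum_mul_sum_of_sq_le_mul s (fun i hi => div_nonneg (hV i hi) (hN i hi).le)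
    (fun i hi => div_nonneg (hN i hi).le (hh i hi)) fun i hi =>
      le_of_eq <| by rw [sq_sqrt (div_nonneg (hV i hi) (hh i hi)), div_mul_div_cancel₀ (hN i hi).ne']

lemma mul_sq_sum_sqrt_div_le_sum_div {c : ℝ} (hc : 0 < c) {N : ι → ℝ} (hV : ∀ i ∈ s, 0 ≤ V i)
    (hh : ∀ i ∈ s, 0 ≤ h i) (hN : ∀ i ∈ s, 0 < N i) (hvar : ∑ i ∈ s, V i / N i ≤ c⁻¹) :
    c * (∑ i ∈ s, √(V i / h i)) ^ 2 ≤ ∑ i ∈ s, N i / h i := by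
  have hcost : 0 ≤ ∑ i ∈ s, N i / h i := sum_nonneg fun i hi => div_nonneg (hN i hi).le (hh i hi)
  calc c * (∑ i ∈ s, √(V i / h i)) ^ 2
      ≤ c * ((∑ i ∈ s, V i / N i) * ∑ i ∈ s, N i / h i) :=
        mul_le_mul_of_nonneg_left (sq_sum_sqrt_div_le_mul_sum s V h hV hh hN) hc.le
    _ ≤ c * (c⁻¹ * ∑ i ∈ s, N i / h i) := by gcongr
    _ = ∑ i ∈ s, N i / h i := by field_simp

end Allocation

theorem optimal_multilevel_sample_allocation
    (L : ℕ) (V h : ℕ → ℝ)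
    (hV : ∀ l ≤ L, 0 < V l) (hh : ∀ l ≤ L, 0 < h l)
    (ε : ℝ) (hε : 0 < ε)
    (Nstar : ℕ → ℝ)
    (hNstar : ∀ l ≤ L, Nstar l = 2 / ε ^ 2 * Real.sqrt (V l * h l)
      * ∑ k ∈ Finset.range (L + 1), Real.sqrt (V k / h k)) :
    (∑ l ∈ Finset.range (L + 1), V l / Nstar l = ε ^ 2 / 2) ∧
    (∑ l ∈ Finset.range (L + 1), Nstar l / h l
      = 2 / ε ^ 2 * (∑ l ∈ Finset.range (L + 1), Real.sqrt (V l / h l)) ^ 2) ∧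
    (∀ NN : ℕ → ℝ, (∀ l ≤ L, 0 < NN l) →
      (∑ l ∈ Finset.range (L + 1), V l / NN l ≤ ε ^ 2 / 2) →
      2 / ε ^ 2 * (∑ l ∈ Finset.range (L + 1), Real.sqrt (V l / h l)) ^ 2
        ≤ ∑ l ∈ Finset.range (L + 1), NN l / h l) := by
  have hs : ∀ l ∈ range (L + 1), l ≤ L := fun l hl => Nat.lt_succ_iff.mp (mem_range.mp hl)
  have hV₀ : ∀ l ∈ range (L + 1), 0 ≤ V l := fun l hl => (hV l (hs l hl)).le
  have hh₀ : ∀ l ∈ range (L + 1), 0 ≤ h l := fun l hl => (hh l (hs l hl)).le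
  have hc : 0 < 2 / ε ^ 2 := by positivity
  have hS : 0 < ∑ k ∈ range (L + 1), √(V k / h k) :=
    sum_pos (fun k hk => sqrt_pos.2 (div_pos (hV k (hs k hk)) (hh k (hs k hk))))
      nonempty_range_add_one
  have hNstar' : ∀ l ∈ range (L + 1), Nstar l = _ := fun l hl => hNstar l (hs l hl)
  refine ⟨?_, ?_, fun N hN hvar => ?_⟩
  · rw [sum_congr rfl fun l hl => by rw [hNstar' l hl],
      sum_div_mul_sqrt_mul_mul_sum _ _ _ hc.ne' hV₀ hS.ne', inv_div]
  · rw [sum_congr rfl fun l hl => by rw [hNstar' l hl], sum_mul_sqrt_mul_mul_sum_div _ _ _ _ hV₀]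
  · exact mul_sq_sum_sqrt_div_le_sum_div _ _ _ hc hV₀ hh₀ (fun l hl => hN l (hs l hl))
      (by rwa [inv_div])
end

section
/- Uniform boundedness of the multilevel cost sum for strong order q > 1/2: let T > 0, c > 0, q > 1/2, and let M ≥ 2 be an integer. Set h_l = T·M^{−l} for l ∈ ℕ, and suppose 0 ≤ V_l ≤ c·h_l^{2q} for all l. Then for every L ∈ ℕ, Σ_{l=0}^{L} √(V_l/h_l) ≤ √c · T^{q−1/2} / (1 − M^{−(q−1/2)}); in particular the sums Σ_{l=0}^{L} √(V_l/h_l) are bounded uniformly in L, so the multilevel cost (2/ε²)(1+1/M)(Σ_{l=0}^{L} √(V_l/h_l))² is O(ε^{−2}) uniformly in L. -/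
/-! With `h_l = T M^{-l}` and `V_l ≤ c h_l^{2q}`, the `l`-th term `√(V_l / h_l)` is at most
`√c h_l^{q - 1/2} = √c T^{q - 1/2} r^l` with `r = M^{-(q - 1/2)}`, and `r < 1` exactly because
`q > 1/2`. The level sums are therefore dominated by a convergent geometric series, and the
multilevel cost is the square of a bounded quantity divided by `ε²`. -/

open Finset Real

lemma Real.sqrt_rpow_two_mul_div_self {h : ℝ} (hh : 0 < h) (q : ℝ) :
    √(h ^ (2 * q) / h) = h ^ (q - 1 / 2) := by
  rw [← rpow_sub_one hh.ne', show 2 * q - 1 = (q - 1 / 2) * (2 : ℕ) by push_cast; ring,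
    rpow_mul_natCast hh.le, sqrt_sq (rpow_nonneg hh.le _)]

lemma Real.sqrt_div_le_of_le_mul_rpow {V c h q : ℝ} (hh : 0 < h) (hV : V ≤ c * h ^ (2 * q)) :
    √(V / h) ≤ √c * h ^ (q - 1 / 2) :=
  calc √(V / h) ≤ √(c * (h ^ (2 * q) / h)) := by
        rw [← mul_div_assoc]; gcongr
    _ = √c * h ^ (q - 1 / 2) := by
        rw [sqrt_mul' c (by positivity), sqrt_rpow_two_mul_div_self hh]

lemma Real.div_pow_rpow {T M : ℝ} (hT : 0 ≤ T) (hM : 0 ≤ M) (s : ℝ) (l : ℕ) :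
    (T / M ^ l) ^ s = T ^ s * (M ^ (-s)) ^ l := by
  rw [div_rpow hT (pow_nonneg hM l), div_eq_mul_inv, ← rpow_natCast_mul hM,
    ← rpow_mul_natCast hM, ← rpow_neg hM, neg_mul, mul_comm (l : ℝ), mul_comm]

lemma Finset.sum_range_le_div_one_sub_of_le_geom {a : ℕ → ℝ} {A r : ℝ} (hA : 0 ≤ A)
    (hr₀ : 0 ≤ r) (hr₁ : r < 1) (ha : ∀ l, a l ≤ A * r ^ l) (n : ℕ) :
    ∑ l ∈ range n, a l ≤ A / (1 - r) :=
  calc ∑ l ∈ range n, a l ≤ ∑ l ∈ range n, A * r ^ l := sum_le_sum fun l _ => ha l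
    _ = A * ∑ l ∈ Ico 0 n, r ^ l := by rw [mul_sum, range_eq_Ico]
    _ ≤ A * (r ^ 0 / (1 - r)) := by gcongr; exact geom_sum_Ico_le_of_lt_one hr₀ hr₁
    _ = A / (1 - r) := by rw [pow_zero, mul_one_div]

theorem sum_range_sqrt_div_step_le {T c q M : ℝ} (hT : 0 < T) (hq : 1 / 2 < q) (hM : 1 < M)
    {V : ℕ → ℝ} (hV : ∀ l : ℕ, V l ≤ c * (T / M ^ l) ^ (2 * q)) (n : ℕ) :
    ∑ l ∈ range n, √(V l / (T / M ^ l))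
      ≤ √c * T ^ (q - 1 / 2) / (1 - M ^ (-(q - 1 / 2))) := by
  have hM₀ : 0 < M := zero_lt_one.trans hM
  refine sum_range_le_div_one_sub_of_le_geom (by positivity) (rpow_nonneg hM₀.le _)
    (rpow_lt_one_of_one_lt_of_neg hM (by linarith)) (fun l => ?_) n
  rw [mul_assoc, ← div_pow_rpow hT.le hM₀.le]
  exact sqrt_div_le_of_le_mul_rpow (div_pos hT (pow_pos hM₀ l)) (hV l)

lemma two_div_sq_mul_mul_sq_le {ε κ S B : ℝ} (hκ : 0 ≤ κ) (hS : 0 ≤ S) (hSB : S ≤ B) :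
    2 / ε ^ 2 * κ * S ^ 2 ≤ 2 * κ * B ^ 2 / ε ^ 2 := by
  rw [div_mul_eq_mul_div, div_mul_eq_mul_div]
  gcongr

theorem multilevel_cost_sum_uniformly_bounded_general
    (T c q : ℝ) (hT : 0 < T) (hq : 1 / 2 < q)
    (M : ℕ) (hM : 2 ≤ M) (V : ℕ → ℝ)
    (hV : ∀ l : ℕ, V l ≤ c * (T / (M : ℝ) ^ l) ^ (2 * q)) :
    (∀ L : ℕ, ∑ l ∈ Finset.range (L + 1), Real.sqrt (V l / (T / (M : ℝ) ^ l))
      ≤ Real.sqrt c * T ^ (q - 1 / 2) / (1 - (M : ℝ) ^ (-(q - 1 / 2)))) ∧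
    ∃ C : ℝ, 0 < C ∧ ∀ ε : ℝ, 0 < ε → ∀ L : ℕ,
      2 / ε ^ 2 * (1 + 1 / (M : ℝ))
        * (∑ l ∈ Finset.range (L + 1), Real.sqrt (V l / (T / (M : ℝ) ^ l))) ^ 2
      ≤ C / ε ^ 2 := by
  have hM₁ : (1 : ℝ) < M := by exact_mod_cast hM
  have hsum := sum_range_sqrt_div_step_le hT hq hM₁ hV
  set B := √c * T ^ (q - 1 / 2) / (1 - (M : ℝ) ^ (-(q - 1 / 2)))
  have hB : 0 ≤ B := div_nonneg (by positivity)
    (sub_nonneg.2 (rpow_lt_one_of_one_lt_of_neg hM₁ (by linarith)).le)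
  refine ⟨fun L => hsum (L + 1), 2 * (1 + 1 / (M : ℝ)) * (B + 1) ^ 2, by positivity,
    fun ε _ L => two_div_sq_mul_mul_sq_le (by positivity)
      (sum_nonneg fun l _ => sqrt_nonneg _) ((hsum (L + 1)).trans (by linarith))⟩

theorem multilevel_cost_sum_uniformly_bounded
    (T c q : ℝ) (hT : 0 < T) (hc : 0 < c) (hq : 1 / 2 < q)
    (M : ℕ) (hM : 2 ≤ M) (V : ℕ → ℝ)
    (hV0 : ∀ l, 0 ≤ V l)
    (hV : ∀ l : ℕ, V l ≤ c * (T / (M : ℝ) ^ l) ^ (2 * q)) :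
    (∀ L : ℕ, ∑ l ∈ Finset.range (L + 1), Real.sqrt (V l / (T / (M : ℝ) ^ l))
      ≤ Real.sqrt c * T ^ (q - 1 / 2) / (1 - (M : ℝ) ^ (-(q - 1 / 2)))) ∧
    ∃ C : ℝ, 0 < C ∧ ∀ ε : ℝ, 0 < ε → ∀ L : ℕ,
      2 / ε ^ 2 * (1 + 1 / (M : ℝ))
        * (∑ l ∈ Finset.range (L + 1), Real.sqrt (V l / (T / (M : ℝ) ^ l))) ^ 2
      ≤ C / ε ^ 2 :=
  multilevel_cost_sum_uniformly_bounded_general T c q hT hq M hM V hV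
end

section
/- Optimal refinement factor for Milstein-type multilevel Monte Carlo: define g : (1, ∞) → ℝ by g(x) = (x² − 1)(1 + 1/x)/(√x − 1)². Then g attains a global minimum on (1, ∞), and every global minimizer lies in the open interval (4, 5); in particular there exists x* with 4 < x* < 5 such that g(x*) ≤ g(x) for all x > 1. -/
open MeasureTheory ProbabilityTheory

/-- The heuristic multilevel-cost function `g(x) = (x² − 1)(1 + 1/x)/(√x − 1)²`. -/
noncomputable def mlmcCost (x : ℝ) : ℝ := (x ^ 2 - 1) * (1 + 1 / x) / (Real.sqrt x - 1) ^ 2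

/-!
In the variable `t = √x` the cost is the rational function `(t + 1)(t² + 1)² / (t²(t − 1))`.
It equals `75/4` at `t = 2`, stays `≥ 75/4` for `t ≤ 2` and for `t ≥ √5`, and drops below
`75/4` at `t = 2.1`. Hence a minimizer of the continuous cost over the compact interval `[4, 5]`
is a global minimizer on `(1, ∞)`, and no point outside `(4, 5)` can be one.
-/

open Set

section MinimizerOutside

variable {α : Type*} {f : α → ℝ} {s : Set α} {c : ℝ} {z : α}

theorem exists_isMinOn_of_le_outside [TopologicalSpace α] {K : Set α} (hK : IsCompact K)
    (hf : ContinuousOn f K) (hz : z ∈ K) (hzc : f z < c) (hout : ∀ y ∈ s, y ∉ K → c ≤ f y) :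
    ∃ x ∈ K, IsMinOn f s x := by
  obtain ⟨x, hxK, hmin⟩ := hK.exists_isMinOn ⟨z, hz⟩ hf
  refine ⟨x, hxK, fun y hys => ?_⟩
  by_cases hyK : y ∈ K
  · exact hmin hyK
  · exact ((hmin hz).trans_lt hzc |>.trans_le (hout y hys hyK)).le

theorem IsMinOn.mem_of_le_outside {U : Set α} {x : α} (hmin : IsMinOn f s x) (hxs : x ∈ s)
    (hz : z ∈ s) (hzc : f z < c) (hout : ∀ y ∈ s, y ∉ U → c ≤ f y) : x ∈ U := by
  by_contra hxU
  exact (hout x hxs hxU).not_gt ((hmin hz).trans_lt hzc)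

end MinimizerOutside

theorem mlmcCost_sq {t : ℝ} (ht : 0 < t) (ht1 : t ≠ 1) :
    mlmcCost (t ^ 2) = (t + 1) * (t ^ 2 + 1) ^ 2 / (t ^ 2 * (t - 1)) := by
  have ht1' : t - 1 ≠ 0 := sub_ne_zero.2 ht1
  rw [mlmcCost, Real.sqrt_sq ht.le]
  field_simp
  ring

theorem mlmcCost_sq_ge {t : ℝ} (ht : 1 < t) (hout : t ^ 2 ≤ 4 ∨ 5 ≤ t ^ 2) :
    75 / 4 ≤ mlmcCost (t ^ 2) := by
  have ht0 : 0 < t - 1 := by linarith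
  rw [mlmcCost_sq (by linarith) ht.ne', le_div_iff₀ (by positivity)]
  have hfactor : 4 * ((t + 1) * (t ^ 2 + 1) ^ 2) - 75 * (t ^ 2 * (t - 1)) =
      (t - 2) * (4 * t ^ 4 + 12 * t ^ 3 - 43 * t ^ 2 - 3 * t - 2) := by ring
  suffices 0 ≤ (t - 2) * (4 * t ^ 4 + 12 * t ^ 3 - 43 * t ^ 2 - 3 * t - 2) by linarith
  rcases hout with hle | hge
  · have ht2 : t ≤ 2 := by nlinarith
    exact mul_nonneg_of_nonpos_of_nonpos (by linarith) (by nlinarith)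
  · have ht2 : 11 / 5 ≤ t := by nlinarith
    exact mul_nonneg (by linarith) (by nlinarith)

theorem mlmcCost_ge_of_notMem_Ioo {x : ℝ} (hx : 1 < x) (hout : x ∉ Ioo 4 5) :
    75 / 4 ≤ mlmcCost x := by
  have hsq : Real.sqrt x ^ 2 = x := Real.sq_sqrt (by linarith)
  rw [← hsq] at hout ⊢
  refine mlmcCost_sq_ge (Real.lt_sqrt_of_sq_lt (by simpa using hx)) ?_
  simp only [mem_Ioo, not_and_or, not_lt] at hout
  exact hout

theorem mlmcCost_lt : mlmcCost (441 / 100) < 75 / 4 := by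
  rw [show (441 / 100 : ℝ) = (21 / 10) ^ 2 by norm_num, mlmcCost_sq (by norm_num) (by norm_num)]
  norm_num

theorem continuousOn_mlmcCost : ContinuousOn mlmcCost (Ioi 1) := by
  refine ContinuousOn.div ?_ (by fun_prop) fun x hx => ?_
  · fun_prop (disch := intro x hx; exact (zero_lt_one.trans hx).ne')
  · have : 0 < Real.sqrt x - 1 := sub_pos.2 (Real.lt_sqrt_of_sq_lt (by simpa using hx))
    positivity

theorem optimal_refinement_factor :
    (∃ x : ℝ, 1 < x ∧ ∀ y : ℝ, 1 < y → mlmcCost x ≤ mlmcCost y) ∧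
    (∀ x : ℝ, 1 < x → (∀ y : ℝ, 1 < y → mlmcCost x ≤ mlmcCost y) → 4 < x ∧ x < 5) ∧
    (∃ x : ℝ, 4 < x ∧ x < 5 ∧ ∀ y : ℝ, 1 < y → mlmcCost x ≤ mlmcCost y) := by
  have hout : ∀ y ∈ Ioi (1 : ℝ), y ∉ Ioo 4 5 → 75 / 4 ≤ mlmcCost y :=
    fun y hy => mlmcCost_ge_of_notMem_Ioo hy
  have hminimizer_mem : ∀ x : ℝ, 1 < x → IsMinOn mlmcCost (Ioi 1) x → x ∈ Ioo 4 5 :=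
    fun x hx hmin => hmin.mem_of_le_outside hx (by norm_num) mlmcCost_lt hout
  obtain ⟨x, hxK, hmin⟩ := exists_isMinOn_of_le_outside isCompact_Icc
    (continuousOn_mlmcCost.mono ((Icc_subset_Ioi_iff (by norm_num)).2 (by norm_num)))
    (by norm_num : (441 / 100 : ℝ) ∈ Icc 4 5) mlmcCost_lt
    fun y hy hyK => hout y hy fun hyU => hyK (Ioo_subset_Icc_self hyU)
  have hx : 1 < x := by linarith [hxK.1]
  obtain ⟨hx4, hx5⟩ := hminimizer_mem x hx hmin
  exact ⟨⟨x, hx, hmin⟩, hminimizer_mem, x, hx4, hx5, hmin⟩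
end

section
/- Exact composition identity for two truncated Milstein steps of unequal sizes: let x ∈ ℝ^d, s₁, s₂ > 0, u, v ∈ ℝ^D, and set y = x + D^f(x, s₁, u) and z = y + D^f(y, s₂, v). Define R_i = (a_i(y) − a_i(x)) s₂, M^{(1)}_i = Σ_{j=1}^D ( b_{ij}(y) − b_{ij}(x) − 2 Σ_{k=1}^D h_{ijk}(x) u_k ) v_j, and M^{(2)}_i = Σ_{j,k=1}^D ( h_{ijk}(y) − h_{ijk}(x) )( v_j v_k − Ω_{jk} s₂ ). Then for every i = 1, ..., d the following exact algebraic identity holds, with no symmetry assumption on h: z_i = x_i + D^f_i(x, s₁ + s₂, u + v) − Σ_{j,k=1}^D h_{ijk}(x)( u_j v_k − u_k v_j ) + R_i + M^{(1)}_i + M^{(2)}_i. -/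
open MeasureTheory ProbabilityTheory

theorem two_step_composition_identity
    (d D : ℕ) (hd : 1 ≤ d) (hD : 1 ≤ D)
    (a : (Fin d → ℝ) → Fin d → ℝ)
    (b : (Fin d → ℝ) → Fin d → Fin D → ℝ)
    (h3 : (Fin d → ℝ) → Fin d → Fin D → Fin D → ℝ)
    (Om : Fin D → Fin D → ℝ)
    (hOm_symm : ∀ j k, Om j k = Om k j)
    (hOm_psd : ∀ u : Fin D → ℝ, 0 ≤ ∑ j, ∑ k, u j * Om j k * u k)
    (x : Fin d → ℝ) (s1 s2 : ℝ) (hs1 : 0 < s1) (hs2 : 0 < s2)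
    (u v : Fin D → ℝ)
    (y z : Fin d → ℝ)
    (hy : y = x + Df a b h3 Om x s1 u)
    (hz : z = y + Df a b h3 Om y s2 v) :
    ∀ i, z i = x i + (Df a b h3 Om x (s1 + s2) (u + v)) i
      - (∑ j, ∑ k, h3 x i j k * (u j * v k - u k * v j))
      + (a y i - a x i) * s2
      + (∑ j, (b y i j - b x i j - 2 * ∑ k, h3 x i j k * u k) * v j)
      + (∑ j, ∑ k, (h3 y i j k - h3 x i j k) * (v j * v k - Om j k * s2)) := by
  intro i
  subst hz
  simp only [Df, Pi.add_apply]
  have e1 : ∑ j, ∑ k, h3 x i j k * ((u j + v j) * (u k + v k) - Om j k * (s1 + s2))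
      = (∑ j, ∑ k, h3 x i j k * (u j * u k - Om j k * s1))
        + (∑ j, ∑ k, h3 x i j k * (v j * v k - Om j k * s2))
        + (∑ j, ∑ k, h3 x i j k * (u j * v k))
        + (∑ j, ∑ k, h3 x i j k * (v j * u k)) := by
    simp only [← Finset.sum_add_distrib]
    exact Finset.sum_congr rfl fun j _ => Finset.sum_congr rfl fun k _ => by ring
  have e2 : ∑ j, (b y i j - b x i j - 2 * ∑ k, h3 x i j k * u k) * v j
      = (∑ j, b y i j * v j) - (∑ j, b x i j * v j)
        - 2 * ∑ j, ∑ k, h3 x i j k * (v j * u k) := by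
    rw [Finset.mul_sum, ← Finset.sum_sub_distrib, ← Finset.sum_sub_distrib]
    refine Finset.sum_congr rfl fun j _ => ?_
    have h : ∑ k, h3 x i j k * (v j * u k) = (∑ k, h3 x i j k * u k) * v j := by
      rw [Finset.sum_mul]
      exact Finset.sum_congr rfl fun k _ => by ring
    rw [h]; ring
  have e3 : ∑ j, ∑ k, (h3 y i j k - h3 x i j k) * (v j * v k - Om j k * s2)
      = (∑ j, ∑ k, h3 y i j k * (v j * v k - Om j k * s2))
        - (∑ j, ∑ k, h3 x i j k * (v j * v k - Om j k * s2)) := by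
    simp only [sub_mul, Finset.sum_sub_distrib]
  have e4 : ∑ j, ∑ k, h3 x i j k * (u j * v k - u k * v j)
      = (∑ j, ∑ k, h3 x i j k * (u j * v k))
        - (∑ j, ∑ k, h3 x i j k * (v j * u k)) := by
    simp only [← Finset.sum_sub_distrib]
    exact Finset.sum_congr rfl fun j _ => Finset.sum_congr rfl fun k _ => by ring
  have e5 : ∑ j, b x i j * (u j + v j) = (∑ j, b x i j * u j) + ∑ j, b x i j * v j := by
    simp [mul_add, Finset.sum_add_distrib]
  rw [e1, e2, e3, e4, e5, hy]
  simp only [Df, Pi.add_apply]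
  ring
end
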